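/- arXiv:1808.04894 — 4 statements merged into one kernel-verified Lean document; each statement's English description precedes it below -/
import Mathlib

section
/- Let V and W be finite-dimensional complex inner product spaces, and equip Hom(V,W) with the inner product ⟨φ,ψ⟩ = tr(φ* ∘ ψ), where φ* denotes the adjoint. If (φ_1,...,φ_n) is an orthonormal basis of Hom(V,W), then for every endomorphism ψ of V one has Σ_{k=1}^{n} φ_k ∘ ψ ∘ φ_k* = tr(ψ) · id_W. -/
open scoped InnerProductSpace

noncomputable def rk {V W : Type*} [NormedAddCommGroup V] [InnerProductSpace ℂ V]
    [NormedAddCommGroup W] [InnerProductSpace ℂ W] (v : V) (w : W) : V →ₗ[ℂ] W :=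
  ((innerSL ℂ v).toLinearMap).smulRight w

lemma rk_apply {V W : Type*} [NormedAddCommGroup V] [InnerProductSpace ℂ V]
    [NormedAddCommGroup W] [InnerProductSpace ℂ W] (v u : V) (w : W) :
    rk v w u = ⟪v, u⟫_ℂ • w := rfl

lemma comp_rk {V W X : Type*} [NormedAddCommGroup V] [InnerProductSpace ℂ V]
    [NormedAddCommGroup W] [InnerProductSpace ℂ W]
    [NormedAddCommGroup X] [InnerProductSpace ℂ X]
    (f : W →ₗ[ℂ] X) (v : V) (w : W) : f ∘ₗ rk v w = rk v (f w) := by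
  ext u; simp [rk_apply]

lemma rk_comp {V W X : Type*} [NormedAddCommGroup V] [InnerProductSpace ℂ V]
    [FiniteDimensional ℂ V]
    [NormedAddCommGroup W] [InnerProductSpace ℂ W] [FiniteDimensional ℂ W]
    [NormedAddCommGroup X] [InnerProductSpace ℂ X]
    (g : W →ₗ[ℂ] V) (v : V) (x : X) :
    rk v x ∘ₗ g = rk (LinearMap.adjoint g v) x := by
  ext u
  simp [rk_apply, LinearMap.adjoint_inner_left]

lemma trace_rk {V : Type*} [NormedAddCommGroup V] [InnerProductSpace ℂ V]
    [FiniteDimensional ℂ V] (v x : V) :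
    LinearMap.trace ℂ V (rk v x) = ⟪v, x⟫_ℂ := by
  let e := stdOrthonormalBasis ℂ V
  rw [LinearMap.trace_eq_matrix_trace ℂ e.toBasis, Matrix.trace]
  simp only [Matrix.diag, LinearMap.toMatrix_apply, OrthonormalBasis.coe_toBasis,
    OrthonormalBasis.coe_toBasis_repr_apply, OrthonormalBasis.repr_apply_apply,
    rk_apply, inner_smul_right]
  exact e.sum_inner_mul_inner v x

lemma rk_decomp {V : Type*} [NormedAddCommGroup V] [InnerProductSpace ℂ V]
    [FiniteDimensional ℂ V] (ψ : V →ₗ[ℂ] V) :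
    ψ = ∑ i, rk ((stdOrthonormalBasis ℂ V) i) (ψ ((stdOrthonormalBasis ℂ V) i)) := by
  ext u
  simp only [LinearMap.sum_apply, rk_apply, ← map_smul]
  rw [← map_sum]
  congr 1
  exact ((stdOrthonormalBasis ℂ V).sum_repr' u).symm

/-- For finite-dimensional complex inner product spaces `V`, `W`, and an
orthonormal basis `φ` of `Hom(V,W)` with respect to the Hilbert–Schmidt inner product
`⟨φ,ψ⟩ = tr (φ* ∘ ψ)`, one has `∑ k, φ k ∘ ψ ∘ (φ k)* = tr ψ • id` for every `ψ : V →ₗ V`. -/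
theorem stmt_0
    (V W : Type*) [NormedAddCommGroup V] [InnerProductSpace ℂ V] [FiniteDimensional ℂ V]
    [NormedAddCommGroup W] [InnerProductSpace ℂ W] [FiniteDimensional ℂ W]
    (n : ℕ) (φ : Module.Basis (Fin n) ℂ (V →ₗ[ℂ] W))
    (horth : ∀ k l, LinearMap.trace ℂ V (LinearMap.adjoint (φ k) ∘ₗ φ l)
      = if k = l then 1 else 0)
    (ψ : V →ₗ[ℂ] V) :
    ∑ k, φ k ∘ₗ ψ ∘ₗ LinearMap.adjoint (φ k)
      = LinearMap.trace ℂ V ψ • (LinearMap.id : W →ₗ[ℂ] W) := by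
  -- completeness relation
  have complete : ∀ X : V →ₗ[ℂ] W,
      ∑ k, (LinearMap.trace ℂ V (LinearMap.adjoint (φ k) ∘ₗ X)) • φ k = X := by
    intro X
    have hc : ∀ k, LinearMap.trace ℂ V (LinearMap.adjoint (φ k) ∘ₗ X) = φ.repr X k := by
      intro k
      have h1 : LinearMap.adjoint (φ k) ∘ₗ X
          = ∑ l, φ.repr X l • (LinearMap.adjoint (φ k) ∘ₗ φ l) := by
        conv_lhs => rw [← φ.sum_repr X]
        ext u
        simp [LinearMap.sum_apply]
        conv_lhs => rw [← φ.sum_repr X]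
        simp only [LinearMap.sum_apply, LinearMap.smul_apply, map_sum, map_smul]
      rw [h1, map_sum]
      simp_rw [map_smul, horth, smul_eq_mul, mul_ite, mul_one, mul_zero]
      simp
    simp_rw [hc]
    exact φ.sum_repr X
  -- key: for rank-one ψ
  have key : ∀ v x : V, ∑ k, φ k ∘ₗ rk v x ∘ₗ LinearMap.adjoint (φ k)
      = ⟪v, x⟫_ℂ • (LinearMap.id : W →ₗ[ℂ] W) := by
    intro v x
    ext w
    have hcomp : ∀ k, φ k ∘ₗ rk v x ∘ₗ LinearMap.adjoint (φ k)
        = rk ((φ k) v) ((φ k) x) := by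
      intro k
      rw [rk_comp, LinearMap.adjoint_adjoint, comp_rk]
    simp_rw [LinearMap.sum_apply, hcomp, rk_apply]
    have := congrArg (fun f : V →ₗ[ℂ] W => f x) (complete (rk v w))
    simp only [LinearMap.sum_apply, LinearMap.smul_apply] at this
    have htr : ∀ k, LinearMap.trace ℂ V (LinearMap.adjoint (φ k) ∘ₗ rk v w)
        = ⟪(φ k) v, w⟫_ℂ := by
      intro k
      rw [comp_rk, trace_rk, LinearMap.adjoint_inner_right]
    simp_rw [htr] at this
    rw [this, rk_apply]
    simp
  -- put together
  conv_lhs => rw [rk_decomp ψ]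
  have hsplit : ∀ k, φ k ∘ₗ (∑ i, rk ((stdOrthonormalBasis ℂ V) i)
        (ψ ((stdOrthonormalBasis ℂ V) i))) ∘ₗ LinearMap.adjoint (φ k)
      = ∑ i, φ k ∘ₗ rk ((stdOrthonormalBasis ℂ V) i)
        (ψ ((stdOrthonormalBasis ℂ V) i)) ∘ₗ LinearMap.adjoint (φ k) := by
    intro k
    ext w
    simp [LinearMap.sum_apply]
  simp_rw [hsplit]
  rw [Finset.sum_comm]
  simp_rw [key]
  rw [← Finset.sum_smul]
  congr 1
  conv_rhs => rw [rk_decomp ψ]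
  rw [map_sum]
  simp_rw [trace_rk]
end

section
/- Let A be a finite-dimensional unital ℂ-algebra with a hermitian inner product h and a conjugate-linear, unital, involutive, anti-multiplicative map a ↦ a* satisfying h(w*·v, 1) = h(v, w) for all v, w ∈ A. Suppose further the Cardy-type identity holds: for some orthonormal basis (v_1,...,v_n) of A and for every v ∈ A, Σ_{k=1}^{n} v_k · v · v_k* = h(1, v) · 1. Then h(1,1)² = dim_ℂ A; equivalently, the norm of the unit element is (dim_ℂ A)^{1/4}. -/
/-- A finite-dimensional unital `ℂ`-algebra with hermitian inner product `h`,
a conjugate-linear unital involutive anti-multiplicative star map `s` with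
`h (s w * v) 1 = h v w`, and an orthonormal basis `b` satisfying the Cardy-type identity
`∑ k, b k * v * s (b k) = h 1 v • 1`.  Then `h 1 1 ^ 2 = dim_ℂ A`, i.e. `‖1‖ = (dim A)^{1/4}`. -/
theorem stmt_5 (A : Type*) [Ring A] [Algebra ℂ A] [FiniteDimensional ℂ A]
    (h : A → A → ℂ) (s : A → A)
    (h_symm : ∀ a b, h a b = starRingEnd ℂ (h b a))
    (h_add : ∀ a b b', h a (b + b') = h a b + h a b')
    (h_smul : ∀ (c : ℂ) (a b : A), h a (c • b) = c * h a b)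
    (h_pos : ∀ a : A, a ≠ 0 → 0 < (h a a).re)
    (hs_add : ∀ a b, s (a + b) = s a + s b)
    (hs_smul : ∀ (c : ℂ) (a : A), s (c • a) = starRingEnd ℂ c • s a)
    (hs_invol : ∀ a, s (s a) = a)
    (hs_one : s 1 = 1)
    (hs_mul : ∀ a b, s (a * b) = s b * s a)
    (hstar : ∀ v w : A, h (s w * v) 1 = h v w)
    (n : ℕ) (b : Module.Basis (Fin n) ℂ A)
    (horth : ∀ k l, h (b k) (b l) = if k = l then 1 else 0)
    (hcardy : ∀ v : A, ∑ k, b k * v * s (b k) = h 1 v • (1 : A)) :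
    h 1 1 ^ 2 = (Module.finrank ℂ A : ℂ) := by
  classical
  -- basic linearity facts
  have h_zero : ∀ a : A, h a 0 = 0 := by
    intro a
    have h0 := h_smul 0 a 0
    simpa using h0
  have h_zero' : ∀ a : A, h 0 a = 0 := by
    intro a; rw [h_symm, h_zero]; simp
  have h_neg : ∀ a x : A, h a (-x) = - h a x := by
    intro a x
    rw [← neg_one_smul ℂ x, h_smul]; ring
  have h_sub : ∀ (a x y : A), h a (x - y) = h a x - h a y := by
    intro a x y
    rw [sub_eq_add_neg, h_add, h_neg]; ring
  have h_add' : ∀ a a' x : A, h (a + a') x = h a x + h a' x := by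
    intro a a' x
    rw [h_symm, h_add, map_add, ← h_symm, ← h_symm]
  have h_smul' : ∀ (c : ℂ) (a x : A), h (c • a) x = (starRingEnd ℂ) c * h a x := by
    intro c a x
    rw [h_symm, h_smul, map_mul, ← h_symm]
  have s_zero : s 0 = 0 := by
    have h0 := hs_add 0 0
    rw [add_zero] at h0
    exact (left_eq_add.mp h0)
  have h_sumr : ∀ (a : A) (g : Fin n → A), h a (∑ k, g k) = ∑ k, h a (g k) := by
    intro a g
    let f : A →ₗ[ℂ] ℂ :=
      { toFun := h a, map_add' := h_add a,
        map_smul' := by intro c x; simpa using h_smul c a x }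
    exact map_sum f g Finset.univ
  have s_sum : ∀ (g : Fin n → A), s (∑ k, g k) = ∑ k, s (g k) := by
    intro g
    exact map_sum (AddMonoidHom.mk' s hs_add) g Finset.univ
  -- nondegeneracy
  have nondeg : ∀ d : A, (∀ w, h w d = 0) → d = 0 := by
    intro d hd
    by_contra hdne
    have hp := h_pos d hdne
    rw [hd d] at hp
    simp at hp
  have heq : ∀ y y' : A, (∀ u, h u y = h u y') → y = y' := by
    intro y y' H
    have h1 : ∀ w, h w (y - y') = 0 := by
      intro w; rw [h_sub, H, sub_self]
    exact sub_eq_zero.mp (nondeg _ h1)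
  -- the key consequences of `hstar`
  have E1 : ∀ a c : A, h a c = h 1 (s a * c) := by
    intro a c
    calc h a c = (starRingEnd ℂ) (h c a) := h_symm a c
      _ = (starRingEnd ℂ) (h (s a * c) 1) := by rw [hstar]
      _ = h 1 (s a * c) := (h_symm 1 _).symm
  have E3 : ∀ y m : A, h 1 (y * m) = h (s y) m := by
    intro y m
    rw [E1 (s y) m, hs_invol]
  -- expansion in the orthonormal basis
  have expansion : ∀ v : A, (∑ k, h (b k) v • b k) = v := by
    intro v
    have key : ∀ l, h (b l) (v - ∑ k, h (b k) v • b k) = 0 := by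
      intro l
      rw [h_sub, h_sumr]
      have : ∀ k, h (b l) (h (b k) v • b k) = h (b k) v * (if l = k then 1 else 0) := by
        intro k; rw [h_smul, horth]
      rw [Finset.sum_congr rfl fun k _ => this k]
      simp [Finset.sum_ite_eq]
    set d := v - ∑ k, h (b k) v • b k with hd
    have keyd : ∀ w, h d w = 0 := by
      let f : A →ₗ[ℂ] ℂ :=
        { toFun := h d, map_add' := h_add d,
          map_smul' := by intro c x; simpa using h_smul c d x }
      have hf : f = (0 : A →ₗ[ℂ] ℂ) := by
        apply b.ext
        intro i
        show h d (b i) = 0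
        rw [h_symm, key i, map_zero]
      intro w
      have := congrFun (congrArg (fun g : A →ₗ[ℂ] ℂ => (g : A → ℂ)) hf) w
      simpa [f] using this
    have : ∀ w, h w d = 0 := by
      intro w; rw [h_symm, keyd, map_zero]
    have hd0 := nondeg d this
    rw [hd] at hd0
    exact (sub_eq_zero.mp hd0).symm
  -- the Nakayama-type map
  let sg : A → A := fun x => ∑ k, h (s x) (s (b k)) • b k
  have sg_apply : ∀ x, sg x = ∑ k, h (s x) (s (b k)) • b k := fun _ => rfl
  have P1 : ∀ u x : A, h u (sg x) = h (s x) (s u) := by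
    intro u x
    rw [sg_apply, h_sumr]
    have l1 : ∀ k, h u (h (s x) (s (b k)) • b k) = h (s x) (s (b k)) * h u (b k) := by
      intro k; rw [h_smul]
    rw [Finset.sum_congr rfl fun k _ => l1 k]
    conv_rhs => rw [← expansion u]
    rw [s_sum]
    have l2 : ∀ k, s (h (b k) u • b k) = (starRingEnd ℂ) (h (b k) u) • s (b k) := by
      intro k; rw [hs_smul]
    rw [Finset.sum_congr rfl fun k _ => l2 k, h_sumr]
    refine Finset.sum_congr rfl fun k _ => ?_
    rw [h_smul, h_symm u (b k), mul_comm]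
  have N1 : ∀ x y : A, h 1 (x * y) = h 1 (y * sg x) := by
    intro x y
    calc h 1 (x * y) = h 1 (s (s x) * y) := by rw [hs_invol]
      _ = h (s x) y := (E1 _ _).symm
      _ = h (s x) (s (s y)) := by rw [hs_invol]
      _ = h (s y) (sg x) := (P1 _ _).symm
      _ = h 1 (y * sg x) := (E3 _ _).symm
  have C2 : ∀ m m' : A, (∀ z, h 1 (z * m) = h 1 (z * m')) → m = m' := by
    intro m m' H
    apply heq
    intro u
    have h1 := H (s u)
    rw [E3, E3, hs_invol] at h1
    exact h1
  have sg_mul : ∀ x y : A, sg (x * y) = sg x * sg y := by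
    intro x y
    apply C2
    intro z
    calc h 1 (z * sg (x * y)) = h 1 ((x * y) * z) := (N1 _ _).symm
      _ = h 1 (x * (y * z)) := by rw [mul_assoc]
      _ = h 1 ((y * z) * sg x) := N1 _ _
      _ = h 1 (y * (z * sg x)) := by rw [mul_assoc]
      _ = h 1 ((z * sg x) * sg y) := N1 _ _
      _ = h 1 (z * (sg x * sg y)) := by rw [mul_assoc]
  have sg_one : sg 1 = 1 := by
    apply C2
    intro z
    have h1 := N1 1 z
    rw [one_mul] at h1
    rw [mul_one]
    exact h1.symm
  have sg_add : ∀ x y : A, sg (x + y) = sg x + sg y := by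
    intro x y
    rw [sg_apply, sg_apply, sg_apply, ← Finset.sum_add_distrib]
    refine Finset.sum_congr rfl fun k _ => ?_
    rw [hs_add, h_add', add_smul]
  have sg_smul : ∀ (c : ℂ) (x : A), sg (c • x) = c • sg x := by
    intro c x
    rw [sg_apply, sg_apply, Finset.smul_sum]
    refine Finset.sum_congr rfl fun k _ => ?_
    rw [hs_smul, h_smul', smul_smul]
    simp
  have L15 : ∀ x : A, sg (s (sg (s x))) = x := by
    intro x
    apply heq
    intro u
    calc h u (sg (s (sg (s x)))) = h (s (s (sg (s x)))) (s u) := P1 _ _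
      _ = h (sg (s x)) (s u) := by rw [hs_invol]
      _ = (starRingEnd ℂ) (h (s u) (sg (s x))) := h_symm _ _
      _ = (starRingEnd ℂ) (h (s (s x)) (s (s u))) := by rw [P1]
      _ = (starRingEnd ℂ) (h x u) := by rw [hs_invol, hs_invol]
      _ = h u x := (h_symm u x).symm
  -- handle the degenerate case
  by_cases htriv : (1 : A) = 0
  · haveI : Subsingleton A := ⟨by
      intro x y
      have hx : x = 0 := by
        calc x = x * 1 := (mul_one x).symm
          _ = x * 0 := by rw [htriv]
          _ = 0 := mul_zero x
      have hy : y = 0 := by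
        calc y = y * 1 := (mul_one y).symm
          _ = y * 0 := by rw [htriv]
          _ = 0 := mul_zero y
      rw [hx, hy]⟩
    have h0 : h 1 1 = 0 := by rw [htriv]; exact h_zero 0
    rw [h0, Module.finrank_zero_of_subsingleton]
    norm_num
  -- main case
  have h11ne : h 1 1 ≠ 0 := by
    intro h0
    have hp := h_pos 1 htriv
    rw [h0] at hp
    simp at hp
  -- Cardy forces sg ∘ sg = id on inverses of units
  have sgsg_unit : ∀ a : Aˣ, sg (sg ((a⁻¹ : Aˣ) : A)) = ((a⁻¹ : Aˣ) : A) := by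
    intro a
    set z : A := sg (s ((a⁻¹ : Aˣ) : A)) with hzdef
    have hz : sg (s z) = ((a⁻¹ : Aˣ) : A) := L15 _
    -- orthogonality of the two twisted families
    have dual : ∀ k l, h (b k * z) (b l * (a : A)) = if k = l then 1 else 0 := by
      intro k l
      calc h (b k * z) (b l * (a : A))
          = h 1 (s (b k * z) * (b l * (a : A))) := E1 _ _
        _ = h 1 ((s z * s (b k)) * (b l * (a : A))) := by rw [hs_mul]
        _ = h 1 (s z * (s (b k) * (b l * (a : A)))) := by rw [mul_assoc]
        _ = h 1 ((s (b k) * (b l * (a : A))) * sg (s z)) := N1 _ _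
        _ = h 1 ((s (b k) * (b l * (a : A))) * ((a⁻¹ : Aˣ) : A)) := by rw [hz]
        _ = h 1 (s (b k) * ((b l * (a : A)) * ((a⁻¹ : Aˣ) : A))) := by rw [mul_assoc]
        _ = h 1 (s (b k) * b l) := by rw [Units.mul_inv_cancel_right]
        _ = h (b k) (b l) := (E1 _ _).symm
        _ = if k = l then 1 else 0 := horth k l
    -- the family (b k * a) spans
    have span : ∀ w : A, (∑ k, h (b k) (w * ((a⁻¹ : Aˣ) : A)) • (b k * (a : A))) = w := by
      intro w
      calc (∑ k, h (b k) (w * ((a⁻¹ : Aˣ) : A)) • (b k * (a : A)))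
          = (∑ k, h (b k) (w * ((a⁻¹ : Aˣ) : A)) • b k) * (a : A) := by
            rw [Finset.sum_mul]
            exact Finset.sum_congr rfl fun k _ => (smul_mul_assoc _ _ _).symm
        _ = (w * ((a⁻¹ : Aˣ) : A)) * (a : A) := by rw [expansion]
        _ = w := Units.inv_mul_cancel_right w a
    -- reproducing property
    have S1 : ∀ w : A, (∑ k, h (b k * z) w • (b k * (a : A))) = w := by
      intro w
      have hcoef : ∀ j, h (b j * z) w = h (b j) (w * ((a⁻¹ : Aˣ) : A)) := by
        intro j
        conv_lhs => rw [← span w]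
        rw [h_sumr]
        have l1 : ∀ k, h (b j * z) (h (b k) (w * ((a⁻¹ : Aˣ) : A)) • (b k * (a : A)))
            = h (b k) (w * ((a⁻¹ : Aˣ) : A)) * (if j = k then 1 else 0) := by
          intro k; rw [h_smul, dual]
        rw [Finset.sum_congr rfl fun k _ => l1 k]
        simp [Finset.sum_ite_eq]
      calc (∑ k, h (b k * z) w • (b k * (a : A)))
          = ∑ k, h (b k) (w * ((a⁻¹ : Aˣ) : A)) • (b k * (a : A)) :=
            Finset.sum_congr rfl fun k _ => by rw [hcoef]
        _ = w := span w
    -- delta sums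
    have dsum : ∀ l m, (∑ k, h (b l) (b k * (a : A)) * h (b k * z) (b m)) = if l = m then 1 else 0 := by
      intro l m
      have hS := S1 (b m)
      calc (∑ k, h (b l) (b k * (a : A)) * h (b k * z) (b m))
          = ∑ k, h (b l) (h (b k * z) (b m) • (b k * (a : A))) := by
            refine Finset.sum_congr rfl fun k _ => ?_
            rw [h_smul, mul_comm]
        _ = h (b l) (∑ k, h (b k * z) (b m) • (b k * (a : A))) := (h_sumr _ _).symm
        _ = h (b l) (b m) := by rw [hS]
        _ = if l = m then 1 else 0 := horth l m
    -- expansion of s (b k * z)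
    have sfk : ∀ k, s (b k * z) = ∑ m, h (b k * z) (b m) • s (b m) := by
      intro k
      conv_lhs => rw [← expansion (b k * z)]
      rw [s_sum]
      refine Finset.sum_congr rfl fun m _ => ?_
      rw [hs_smul, ← h_symm]
    -- Lemma A : basis change invariance of the Cardy sum
    have LA : ∀ v : A, (∑ k, (b k * (a : A)) * v * s (b k * z)) = ∑ k, b k * v * s (b k) := by
      intro v
      calc (∑ k, (b k * (a : A)) * v * s (b k * z))
          = ∑ k, ∑ l, ∑ m, (h (b l) (b k * (a : A)) * h (b k * z) (b m)) • (b l * v * s (b m)) := by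
            refine Finset.sum_congr rfl fun k _ => ?_
            conv_lhs => rw [← expansion (b k * (a : A)), sfk k]
            simp only [Finset.sum_mul, Finset.mul_sum, smul_mul_assoc, mul_smul_comm, smul_smul,
              Finset.smul_sum]
            rw [Finset.sum_comm]
            exact Finset.sum_congr rfl fun l _ => Finset.sum_congr rfl fun m _ => by
              rw [mul_comm]
        _ = ∑ l, ∑ m, (∑ k, h (b l) (b k * (a : A)) * h (b k * z) (b m)) • (b l * v * s (b m)) := by
            rw [Finset.sum_comm]
            refine Finset.sum_congr rfl fun l _ => ?_
            rw [Finset.sum_comm]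
            refine Finset.sum_congr rfl fun m _ => ?_
            rw [Finset.sum_smul]
        _ = ∑ l, ∑ m, (if l = m then (1:ℂ) else 0) • (b l * v * s (b m)) := by
            refine Finset.sum_congr rfl fun l _ => Finset.sum_congr rfl fun m _ => ?_
            rw [dsum]
        _ = ∑ k, b k * v * s (b k) := by
            simp only [ite_smul, one_smul, zero_smul, Finset.sum_ite_eq, Finset.mem_univ, if_true]
    -- now use Cardy twice
    have key : ∀ v : A, h 1 ((a : A) * v * s z) = h 1 v := by
      intro v
      have e1 : (∑ k, b k * ((a : A) * v * s z) * s (b k)) = ∑ k, b k * v * s (b k) := by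
        rw [← LA v]
        refine Finset.sum_congr rfl fun k _ => ?_
        simp only [hs_mul, mul_assoc]
      have c1 := hcardy ((a : A) * v * s z)
      rw [e1, hcardy v] at c1
      have c2 := congrArg (h 1) c1
      rw [h_smul, h_smul] at c2
      exact (mul_right_cancel₀ h11ne c2).symm
    have key2 : s z * sg (a : A) = 1 := by
      apply C2
      intro v
      calc h 1 (v * (s z * sg (a : A)))
          = h 1 ((v * s z) * sg (a : A)) := by rw [mul_assoc]
        _ = h 1 ((a : A) * (v * s z)) := (N1 _ _).symm
        _ = h 1 ((a : A) * v * s z) := by rw [mul_assoc]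
        _ = h 1 v := key v
        _ = h 1 (v * 1) := by rw [mul_one]
    have hsga : sg (a : A) * sg ((a⁻¹ : Aˣ) : A) = 1 := by
      rw [← sg_mul, Units.mul_inv, sg_one]
    have hsz : s z = sg ((a⁻¹ : Aˣ) : A) := by
      calc s z = s z * 1 := (mul_one _).symm
        _ = s z * (sg (a : A) * sg ((a⁻¹ : Aˣ) : A)) := by rw [hsga]
        _ = (s z * sg (a : A)) * sg ((a⁻¹ : Aˣ) : A) := by rw [mul_assoc]
        _ = 1 * sg ((a⁻¹ : Aˣ) : A) := by rw [key2]
        _ = sg ((a⁻¹ : Aˣ) : A) := one_mul _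
    have final := congrArg sg hsz
    rw [hzdef] at final
    rw [L15] at final
    exact final.symm
  have sgsg_isUnit : ∀ y : A, IsUnit y → sg (sg y) = y := by
    rintro _ ⟨w, rfl⟩
    have := sgsg_unit w⁻¹
    rwa [inv_inv] at this
  -- every element is a unit plus a scalar
  haveI : Algebra.IsIntegral ℂ A := Algebra.IsIntegral.of_finite ℂ A
  have exists_unit : ∀ x : A, ∃ c : ℂ, IsUnit (x - c • 1) := by
    intro x
    obtain ⟨p, pmon, hp⟩ := Algebra.IsIntegral.isIntegral (R := ℂ) x
    have pne : p ≠ 0 := pmon.ne_zero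
    obtain ⟨c, hc⟩ := Infinite.exists_notMem_finset p.roots.toFinset
    have hev : p.eval c ≠ 0 := by
      intro h0
      exact hc (Multiset.mem_toFinset.mpr (Polynomial.mem_roots'.mpr ⟨pne, h0⟩))
    refine ⟨c, ?_⟩
    have hmod := Polynomial.modByMonic_add_div p (Polynomial.X - Polynomial.C c)
    rw [Polynomial.modByMonic_X_sub_C_eq_C_eval] at hmod
    have haev := congrArg (Polynomial.aeval x) hmod
    have hp' : Polynomial.aeval x p = 0 := by rw [Polynomial.aeval_def]; exact hp
    rw [map_add, map_mul, Polynomial.aeval_C, map_sub, Polynomial.aeval_X,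
      Polynomial.aeval_C, hp'] at haev
    rw [Algebra.algebraMap_eq_smul_one (p.eval c), Algebra.algebraMap_eq_smul_one c] at haev
    -- haev : p.eval c • 1 + (x - c • 1) * aeval x (p /ₘ (X - C c)) = 0
    set Q := Polynomial.aeval x (p /ₘ (Polynomial.X - Polynomial.C c)) with hQ
    have heq2 : (x - c • 1) * Q = (-(p.eval c)) • 1 := by
      have h2 := eq_neg_of_add_eq_zero_right haev
      rw [h2, neg_smul]
    have hXaev : (x - c • (1 : A)) = Polynomial.aeval x (Polynomial.X - Polynomial.C c) := by
      rw [map_sub, Polynomial.aeval_X, Polynomial.aeval_C, Algebra.algebraMap_eq_smul_one]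
    have hcomm : Q * (x - c • 1) = (x - c • 1) * Q := by
      rw [hXaev, hQ, ← map_mul, ← map_mul, mul_comm]
    have hrne : (-(p.eval c)) ≠ 0 := neg_ne_zero.mpr hev
    refine ⟨⟨x - c • 1, (-(p.eval c))⁻¹ • Q, ?_, ?_⟩, rfl⟩
    · show (x - c • 1) * ((-(p.eval c))⁻¹ • Q) = 1
      rw [mul_smul_comm, heq2, smul_smul, inv_mul_cancel₀ hrne, one_smul]
    · show ((-(p.eval c))⁻¹ • Q) * (x - c • 1) = 1
      rw [smul_mul_assoc, hcomm, heq2, smul_smul, inv_mul_cancel₀ hrne, one_smul]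
  -- sg ∘ sg = id everywhere
  have sgsg : ∀ x : A, sg (sg x) = x := by
    intro x
    obtain ⟨c, hc⟩ := exists_unit x
    have h1 : sg (sg (x - c • 1)) = x - c • 1 := sgsg_isUnit _ hc
    have h2 : sg (sg (c • (1 : A))) = c • (1 : A) := by
      rw [sg_smul, sg_one, sg_smul, sg_one]
    have h3 : sg (sg (x - c • 1 + c • 1)) = x - c • 1 + c • 1 := by
      rw [sg_add, sg_add, h1, h2]
    rwa [sub_add_cancel] at h3
  -- positivity forces sg = id
  have sg_id : ∀ x : A, sg x = x := by
    intro x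
    by_contra hne
    have hvne : sg x - x ≠ 0 := sub_ne_zero.mpr hne
    set v : A := sg x - x with hv
    have sg_sub : ∀ p q : A, sg (p - q) = sg p - sg q := by
      intro p q
      have : sg (p + (-1 : ℂ) • q) = sg p + (-1 : ℂ) • sg q := by
        rw [sg_add, sg_smul]
      simpa [neg_one_smul, sub_eq_add_neg] using this
    have hsgv : sg v = -v := by
      rw [hv, sg_sub, sgsg]
      abel
    have hp1 : h v (sg v) = h (s v) (s v) := P1 v v
    rw [hsgv, h_neg] at hp1
    have hsvne : s v ≠ 0 := by
      intro h0
      apply hvne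
      rw [← hs_invol v, h0, s_zero]
    have p1 := h_pos v hvne
    have p2 := h_pos (s v) hsvne
    rw [← hp1] at p2
    rw [Complex.neg_re] at p2
    linarith
  -- h 1 (x*y) is a trace
  have trace : ∀ x y : A, h 1 (x * y) = h 1 (y * x) := by
    intro x y
    rw [N1, sg_id]
  -- finish
  have t1 : ∀ k, h 1 (s (b k) * b k) = 1 := by
    intro k
    rw [← E1]
    rw [horth]
    simp
  have t2 : (∑ k, h 1 (b k * s (b k))) = (n : ℂ) := by
    calc (∑ k, h 1 (b k * s (b k)))
        = ∑ k, h 1 (s (b k) * b k) :=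
          Finset.sum_congr rfl fun k _ => (trace (s (b k)) (b k)).symm
      _ = ∑ _k : Fin n, (1 : ℂ) := Finset.sum_congr rfl fun k _ => t1 k
      _ = (n : ℂ) := by simp
  have t3 : (∑ k, h 1 (b k * s (b k))) = h 1 1 * h 1 1 := by
    rw [← h_sumr]
    have hc := hcardy 1
    simp only [mul_one] at hc
    rw [hc, h_smul]
  have t4 : (n : ℂ) = h 1 1 * h 1 1 := by rw [← t2, t3]
  have fr : (Module.finrank ℂ A : ℂ) = (n : ℂ) := by
    rw [Module.finrank_eq_card_basis b, Fintype.card_fin]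
  rw [fr, t4, sq]
end

section
/- Let A be a finite-dimensional unital ℂ-algebra with linear functional θ such that σ(a,b) := θ(ab) is nondegenerate and symmetric (a symmetric Frobenius algebra). If the Euler element χ = Σ_k v_k · v^k (for dual bases (v_k), (v^k) with respect to σ) is invertible in A, then A is a semisimple algebra. -/
/-- If the Euler element `χ = ∑ k, v k * w k` of a symmetric Frobenius
`ℂ`-algebra (formed from `σ`-dual bases `(v k)`, `(w k)`) is invertible, then the algebra
is semisimple. -/
theorem stmt_9 (A : Type*) [Ring A] [Algebra ℂ A] [FiniteDimensional ℂ A]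
    (θ : A →ₗ[ℂ] ℂ)
    (hnd : Function.Bijective fun a : A => θ ∘ₗ LinearMap.mulLeft ℂ a)
    (hsymm : ∀ a b : A, θ (a * b) = θ (b * a))
    (n : ℕ) (v : Module.Basis (Fin n) ℂ A) (w : Fin n → A)
    (hdual : ∀ k l, θ (w k * v l) = if k = l then 1 else 0)
    (hinv : IsUnit (∑ k, v k * w k)) :
    IsSemisimpleRing A := by
  classical
  rcases Nat.eq_zero_or_pos n with hn | hn
  · -- trivial ring
    subst hn
    have hsub : Subsingleton A := ⟨fun a b => by
      have ha := v.sum_repr a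
      have hb := v.sum_repr b
      simp only [Finset.univ_eq_empty, Finset.sum_empty] at ha hb
      rw [← ha, ← hb]⟩
    refine IsSemisimpleModule.mk (toComplementedLattice := ⟨?_⟩)
    intro N
    refine ⟨⊥, ?_⟩
    haveI := hsub
    rw [Subsingleton.elim N ⊤]
    exact isCompl_top_bot
  haveI : Nonempty (Fin n) := ⟨⟨0, hn⟩⟩
  -- expansion in the basis v: coefficients are θ (w k * x)
  have expand_v : ∀ x : A, x = ∑ k, θ (w k * x) • v k := by
    intro x
    conv_lhs => rw [← v.sum_repr x]
    refine Finset.sum_congr rfl fun k _ => ?_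
    congr 1
    conv_rhs => rw [← v.sum_repr x]
    rw [Finset.mul_sum, map_sum]
    simp_rw [mul_smul_comm, map_smul, hdual]
    simp
  -- w is linearly independent, hence a basis; expansion coefficients are θ (x * v k)
  have hw_li : LinearIndependent ℂ w := by
    rw [linearIndependent_iff']
    intro s g hg k hk
    have := congrArg (fun x => θ (x * v k)) hg
    simp only [Finset.sum_mul, map_sum, smul_mul_assoc, map_smul, hdual] at this
    rw [Finset.sum_eq_single k] at this
    · simpa using this
    · intro b _ hb; simp [hb]
    · intro h; exact absurd hk h
  have hcard : Fintype.card (Fin n) = Module.finrank ℂ A := by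
    simpa using (Module.finrank_eq_card_basis v).symm
  let bw : Module.Basis (Fin n) ℂ A := basisOfLinearIndependentOfCardEqFinrank hw_li hcard
  have bw_apply : ∀ k, bw k = w k := fun k =>
    congrFun (coe_basisOfLinearIndependentOfCardEqFinrank hw_li hcard) k
  have expand_w : ∀ x : A, x = ∑ k, θ (x * v k) • w k := by
    intro x
    conv_lhs => rw [← bw.sum_repr x]
    simp_rw [bw_apply]
    refine Finset.sum_congr rfl fun k _ => ?_
    congr 1
    conv_rhs => rw [← bw.sum_repr x]
    simp_rw [bw_apply]
    rw [Finset.sum_mul, map_sum]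
    simp_rw [smul_mul_assoc, map_smul, hdual]
    rw [Finset.sum_eq_single k]
    · simp
    · intro b _ hb; simp [hb]
    · intro h; exact absurd (Finset.mem_univ k) h
  -- the key Casimir sliding identity
  have slide : ∀ (f : A →ₗ[ℂ] A) (a m : A),
      ∑ k, (a * v k) * f (w k * m) = ∑ k, v k * f (w k * a * m) := by
    intro f a m
    have lhs : ∀ k, (a * v k) * f (w k * m)
        = ∑ j, θ (w j * (a * v k)) • (v j * f (w k * m)) := by
      intro k
      conv_lhs => rw [expand_v (a * v k)]
      rw [Finset.sum_mul]
      simp_rw [smul_mul_assoc]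
    have rhs : ∀ k, v k * f (w k * a * m)
        = ∑ j, θ ((w k * a) * v j) • (v k * f (w j * m)) := by
      intro k
      have : w k * a * m = ∑ j, θ ((w k * a) * v j) • (w j * m) := by
        conv_lhs => rw [show w k * a * m = (w k * a) * m from rfl, expand_w (w k * a)]
        rw [Finset.sum_mul]
        simp_rw [smul_mul_assoc]
      rw [this, map_sum]
      simp_rw [map_smul, Finset.mul_sum, mul_smul_comm]
    simp_rw [lhs, rhs]
    rw [Finset.sum_comm]
    refine Finset.sum_congr rfl fun k _ => Finset.sum_congr rfl fun j _ => ?_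
    congr 2
    rw [mul_assoc]
  -- the Euler element and its inverse
  set χ := ∑ k, v k * w k with hχ
  obtain ⟨u, hu⟩ := hinv
  set c : A := ↑u⁻¹ with hc
  have hcχ : c * χ = 1 := by rw [hc, ← hu]; exact u.inv_mul
  have hχc : χ * c = 1 := by rw [hc, ← hu]; exact u.mul_inv
  have hcen : ∀ a : A, a * χ = χ * a := by
    intro a
    have h := slide LinearMap.id a 1
    simp only [LinearMap.id_coe, id_eq, mul_one] at h
    have e1 : a * χ = ∑ k, a * v k * w k := by
      rw [hχ, Finset.mul_sum]
      exact Finset.sum_congr rfl fun k _ => (mul_assoc a _ _).symm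
    have e2 : χ * a = ∑ k, v k * (w k * a) := by
      rw [hχ, Finset.sum_mul]
      exact Finset.sum_congr rfl fun k _ => mul_assoc _ _ _
    rw [e1, e2]
    exact h
  have hcenc : ∀ a : A, a * c = c * a := by
    intro a
    rw [hc, Units.eq_inv_mul_iff_mul_eq, ← mul_assoc, hu, ← hcen, mul_assoc, ← hu]
    rw [u.mul_inv, mul_one]
  -- now semisimplicity
  refine IsSemisimpleModule.mk (toComplementedLattice := ⟨?_⟩)
  intro N
  -- a ℂ-linear projection onto N
  obtain ⟨P, hP⟩ := Submodule.exists_isCompl (N.restrictScalars ℂ)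
  let π0 : A →ₗ[ℂ] A :=
    (N.restrictScalars ℂ).subtype ∘ₗ (N.restrictScalars ℂ).linearProjOfIsCompl P hP
  have π0_mem : ∀ x : A, π0 x ∈ N := fun x =>
    ((N.restrictScalars ℂ).linearProjOfIsCompl P hP x).2
  have π0_id : ∀ x ∈ N, π0 x = x := by
    intro x hx
    simp only [π0, LinearMap.comp_apply, Submodule.subtype_apply]
    exact congrArg Subtype.val (Submodule.projectionOnto_apply_left hP ⟨x, hx⟩)
  -- the averaged, A-linear projection
  let π : A →ₗ[A] A :=
    { toFun := fun m => c * ∑ k, v k * π0 (w k * m)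
      map_add' := by
        intro x y
        simp [mul_add, map_add, Finset.mul_sum, Finset.sum_add_distrib]
      map_smul' := by
        intro a m
        simp only [smul_eq_mul, RingHom.id_apply]
        have e0 : ∑ k, v k * π0 (w k * (a * m)) = ∑ k, (a * v k) * π0 (w k * m) := by
          simp_rw [← mul_assoc]
          exact (slide π0 a m).symm
        have e1 : ∑ k, (a * v k) * π0 (w k * m) = a * ∑ k, v k * π0 (w k * m) := by
          rw [Finset.mul_sum]
          exact Finset.sum_congr rfl fun k _ => mul_assoc _ _ _
        rw [e0, e1, ← mul_assoc, ← hcenc, mul_assoc] }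
  have π_mem : ∀ m : A, π m ∈ N := by
    intro m
    refine N.smul_mem c (Submodule.sum_mem N fun k _ => ?_)
    exact N.smul_mem (v k) (π0_mem _)
  have π_id : ∀ x ∈ N, π x = x := by
    intro x hx
    show c * ∑ k, v k * π0 (w k * x) = x
    have h1 : ∀ k, π0 (w k * x) = w k * x := fun k => π0_id _ (N.smul_mem (w k) hx)
    simp_rw [h1]
    have h2 : ∑ k, v k * (w k * x) = χ * x := by
      rw [hχ, Finset.sum_mul]
      exact Finset.sum_congr rfl fun k _ => (mul_assoc _ _ _).symm
    rw [h2, ← mul_assoc, hcχ, one_mul]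
  refine ⟨LinearMap.ker π, ?_, ?_⟩
  · rw [disjoint_iff_inf_le]
    intro x ⟨hxN, hxK⟩
    have hx0 : π x = 0 := hxK
    rw [π_id x hxN] at hx0
    simpa using hx0
  · rw [codisjoint_iff_le_sup]
    intro m _
    have h1 : π m ∈ N := π_mem m
    have h2 : m - π m ∈ LinearMap.ker π := by
      rw [LinearMap.mem_ker, map_sub, π_id _ h1, sub_self]
    have h3 : m = π m + (m - π m) := by abel
    rw [h3]
    exact Submodule.add_mem_sup h1 h2
end

section
/- Let A be a finite-dimensional unital ℂ-algebra with a linear functional θ such that σ(a,b) := θ(ab) is nondegenerate and symmetric, and suppose A decomposes as a direct sum of r matrix algebras, A ≅ ⊕_{l=1}^{r} End(W_l) for complex vector spaces W_l. Fix a basis (v_1,...,v_n) of A adapted to this decomposition, with σ-dual basis (v^1,...,v^n). If the linear map π: A → A defined by π(v) := Σ_{k=1}^{n} v_k · v · v^k factors through a one-dimensional vector space (i.e., has rank at most 1), then r = 1, i.e., A is simple. -/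
/-- Let `A` be a (nontrivial) symmetric Frobenius `ℂ`-algebra which decomposes
as a direct sum of `r` matrix algebras, `A ≅ ⊕_{l} End(W_l)` with each `W_l` a nonzero
finite-dimensional complex vector space.  Fix a basis `(v k)` of `A` adapted to the
decomposition (each `e (v k)` is supported in a single summand) with `σ`-dual basis `(w k)`.
If the linear map `π : A → A`, `π(v) = ∑ k, v k * v * w k`, has rank at most `1`, then
`r = 1`, i.e. `A` is simple. -/
theorem stmt_18 (A : Type) [Ring A] [Algebra ℂ A] [FiniteDimensional ℂ A] [Nontrivial A]
    (θ : A →ₗ[ℂ] ℂ)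
    (hnd : Function.Bijective fun a : A => θ ∘ₗ LinearMap.mulLeft ℂ a)
    (hsymm : ∀ a b : A, θ (a * b) = θ (b * a))
    (r : ℕ) (W : Fin r → Type) [∀ l, AddCommGroup (W l)] [∀ l, Module ℂ (W l)]
    [∀ l, FiniteDimensional ℂ (W l)] (hW : ∀ l, 0 < Module.finrank ℂ (W l))
    (e : A ≃ₐ[ℂ] ∀ l, Module.End ℂ (W l))
    (n : ℕ) (v : Module.Basis (Fin n) ℂ A) (w : Fin n → A)
    (hdual : ∀ k l, θ (w k * v l) = if k = l then 1 else 0)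
    (hadapted : ∀ k : Fin n, ∃ l : Fin r, ∀ l' : Fin r, l' ≠ l → e (v k) l' = 0)
    (hrank : Module.finrank ℂ (LinearMap.range
        (∑ k, LinearMap.mulRight ℂ (w k) ∘ₗ LinearMap.mulLeft ℂ (v k))) ≤ 1) :
    r = 1 := by
  classical
  -- r ≠ 0
  have hr0 : r ≠ 0 := by
    rintro rfl
    have hsub : Subsingleton (∀ l : Fin 0, Module.End ℂ (W l)) :=
      ⟨fun a b => funext fun l => l.elim0⟩
    have : Subsingleton A := e.toEquiv.subsingleton
    exact not_subsingleton A this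
  -- each End (W l) is nontrivial
  have hWnt : ∀ l, Nontrivial (W l) := fun l => Module.finrank_pos_iff.mp (hW l)
  have hEndnt : ∀ l, (1 : Module.End ℂ (W l)) ≠ 0 := by
    intro l
    obtain ⟨x, hx⟩ := exists_ne (0 : W l)
    intro h
    have : x = 0 := by
      have := congrArg (fun f : Module.End ℂ (W l) => f x) h
      simpa using this
    exact hx this
  set π : A →ₗ[ℂ] A := ∑ k, LinearMap.mulRight ℂ (w k) ∘ₗ LinearMap.mulLeft ℂ (v k) with hπdef
  have hπ : ∀ x : A, π x = ∑ k, v k * x * w k := by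
    intro x
    simp [hπdef, LinearMap.sum_apply]
  -- central idempotents
  set c : Fin r → A := fun l => e.symm (Pi.single l 1) with hcdef
  have hec : ∀ l, e (c l) = Pi.single l 1 := fun l => e.apply_symm_apply _
  have hcne : ∀ l, c l ≠ 0 := by
    intro l h
    have h0 : (Pi.single l 1 : ∀ l, Module.End ℂ (W l)) = 0 := by
      rw [← hec l, h, map_zero]
    have := congrFun h0 l
    simp at this

  -- choose the supporting summand for each basis vector
  have hL : ∀ k : Fin n, ∀ l', l' ≠ (hadapted k).choose → e (v k) l' = 0 :=
    fun k => (hadapted k).choose_spec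
  set L : Fin n → Fin r := fun k => (hadapted k).choose with hLdef
  -- c l * v k
  have hcv : ∀ l k, c l * v k = if L k = l then v k else 0 := by
    intro l k
    apply e.injective
    rw [map_mul, hec]
    funext l'
    by_cases hll : L k = l
    · subst hll
      simp only [Pi.mul_apply, if_true]
      by_cases h' : l' = L k
      · subst h'; simp [Pi.single_apply]
      · simp [Pi.single_apply, h', hL k l' h']
    · simp only [hll, if_false, map_zero, Pi.zero_apply, Pi.mul_apply]
      by_cases h' : l' = l
      · subst h'; rw [hL k l' (fun h => hll h.symm)]; simp
      · simp [Pi.single_apply, h']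
  -- c l central
  have hcent : ∀ l (x : A), c l * x = x * c l := by
    intro l x
    apply e.injective
    rw [map_mul, map_mul, hec]
    funext l'
    by_cases h' : l' = l
    · subst h'; simp [Pi.single_apply]
    · simp [Pi.single_apply, h']
  -- the images u l := π (c l)
  set u : Fin r → A := fun l => π (c l) with hudef
  have hu : ∀ l, u l = ∑ k, (c l * v k) * w k := by
    intro l
    show π (c l) = _
    rw [hπ]
    exact Finset.sum_congr rfl fun k _ => by rw [← hcent l (v k)]
  -- there is a basis vector in each summand
  have hex : ∀ l, ∃ k, L k = l := by
    intro l
    by_contra h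
    push_neg at h
    have hzero : ∀ k, c l * v k = 0 := by
      intro k; rw [hcv]; simp [h k]
    have hml : LinearMap.mulLeft ℂ (c l) = 0 := by
      apply Module.Basis.ext v
      intro k
      simpa using hzero k
    have : c l = 0 := by
      have := congrArg (fun f : A →ₗ[ℂ] A => f 1) hml
      simpa using this
    exact hcne l this
  -- θ (u l) ≠ 0
  have hθu : ∀ l, θ (u l) ≠ 0 := by
    intro l
    rw [hu, map_sum]
    have key : ∀ k, θ ((c l * v k) * w k) = if L k = l then 1 else 0 := by
      intro k
      rw [hcv]
      by_cases h : L k = l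
      · simp only [h, if_true]
        rw [hsymm, hdual]
        simp
      · simp [h]
    rw [Finset.sum_congr rfl (fun k _ => key k), Finset.sum_boole]
    obtain ⟨k, hk⟩ := hex l
    have : (Finset.univ.filter fun k => L k = l).Nonempty := ⟨k, by simp [hk]⟩
    simpa using Finset.card_ne_zero_of_mem this.choose_spec
  have hune : ∀ l, u l ≠ 0 := fun l h => hθu l (by rw [h, map_zero])
  -- u l is supported in summand l
  have hsupp : ∀ l l', l' ≠ l → e (u l) l' = 0 := by
    intro l l' h
    have hcu : u l = c l * u l := by
      rw [hu, Finset.mul_sum]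
      refine Finset.sum_congr rfl fun k _ => ?_
      rw [← mul_assoc]
      congr 1
      rw [hcv]
      split_ifs with hh
      · rw [hcv, if_pos hh]
      · rw [mul_zero]
    rw [hcu, map_mul, hec]
    simp [Pi.mul_apply, Pi.single_apply, h]
  -- linear independence of u
  have hind : LinearIndependent ℂ u := by
    rw [Fintype.linearIndependent_iff]
    intro g hg l
    have h1 : ∑ i, g i • e (u i) l = 0 := by
      have h2 := congrArg e hg
      rw [map_sum, map_zero] at h2
      simp only [map_smul] at h2
      have h3 := congrFun h2 l
      simpa [Finset.sum_apply] using h3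
    rw [Finset.sum_eq_single l (fun i _ hi => by rw [hsupp i l hi.symm, smul_zero])
      (fun h => absurd (Finset.mem_univ l) h)] at h1
    have hul : e (u l) l ≠ 0 := by
      intro h0
      apply hune l
      apply e.injective
      rw [map_zero]
      funext l'
      by_cases h' : l' = l
      · subst h'; exact h0
      · exact hsupp l l' h'
    rcases smul_eq_zero.mp h1 with h | h
    · exact h
    · exact absurd h hul
  -- transfer into the range of π
  have hmem : ∀ l, u l ∈ LinearMap.range π := fun l => ⟨c l, rfl⟩
  have hind' : LinearIndependent ℂ (fun l => (⟨u l, hmem l⟩ : LinearMap.range π)) := by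
    apply LinearIndependent.of_comp (LinearMap.range π).subtype
    exact hind
  have hcard := hind'.fintype_card_le_finrank
  simp only [Fintype.card_fin] at hcard
  omega
end
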